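/- arXiv:1109.3137 — 2 statements merged into one kernel-verified Lean document; each statement's English description precedes it below -/
import Mathlib

section
/- If Ḡ is weakly connected and compact, then the algebra 𝔸 of eventually flat functions (extended continuously to Ḡ) is uniformly dense in C(Ḡ), the continuous real-valued functions on Ḡ. -/
open UniformSpace Filter Topology
open scoped ENNReal

noncomputable section

/-- A locally finite edge-weighted (resistance) graph. -/
structure WGraph (V : Type*) where
  Adj : V → V → Prop
  symm : ∀ u v, Adj u v → Adj v u
  loopless : ∀ v, ¬ Adj v v
  R : V → V → ℝ
  Rsymm : ∀ u v, R u v = R v u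
  Rpos : ∀ u v, Adj u v → 0 < R u v
  locFin : ∀ v, {u | Adj u v}.Finite

namespace WGraph

variable {V : Type*} (G : WGraph V)

/-- The set of edges, as unordered pairs of vertices. -/
def edgeSet : Set (Sym2 V) := {e | ∃ u v, G.Adj u v ∧ e = s(u, v)}

/-- The set of total lengths of finite paths joining `u` to `v`. -/
def pathLengths (u v : V) : Set ℝ :=
  {L | ∃ (n : ℕ) (p : ℕ → V), p 0 = u ∧ p n = v ∧
        (∀ k < n, G.Adj (p k) (p (k + 1))) ∧
        L = ∑ k ∈ Finset.range n, G.R (p k) (p (k + 1))}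

/-- `G` is connected: any two vertices are joined by a finite path. -/
def Connected : Prop := ∀ u v : V, (G.pathLengths u v).Nonempty

/-- The metric on the vertex set is the minimal resistance path metric of `G`. -/
def IsPathMetric [MetricSpace V] : Prop :=
  ∀ u v : V, dist u v = sInf (G.pathLengths u v)

/-- Eventually flat functions: the values differ across only finitely many edges. -/
def EventuallyFlat (φ : V → ℝ) : Prop :=
  {p : V × V | G.Adj p.1 p.2 ∧ φ p.1 ≠ φ p.2}.Finite

open Classical in
/-- The conductance: the reciprocal resistance on edges, `0` off edges. -/
def cond (u v : V) : ℝ := if G.Adj u v then (G.R u v)⁻¹ else 0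

/-- `f` is harmonic at `v`: its value is the conductance-weighted average of the
values at the adjacent vertices. -/
def HarmonicAt (f : V → ℝ) (v : V) : Prop :=
  f v = (∑ u ∈ (G.locFin v).toFinset, G.cond u v)⁻¹ *
          ∑ u ∈ (G.locFin v).toFinset, G.cond u v * f u

/-- The weighted `ℓ²(μ)` inner product. -/
def winner (μ : V → ℝ) (f g : V → ℝ) : ℝ := ∑' v, f v * g v * μ v

/-- The bilinear (energy) form associated to conductances `C`. -/
def Bform (C : V → V → ℝ) (f g : V → ℝ) : ℝ :=
  (1 / 2) * ∑' p : V × V, C p.1 p.2 * (f p.1 - f p.2) * (g p.1 - g p.2)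

/-- The formal Laplacian `Δ_μ`. -/
def lap (C : V → V → ℝ) (μ : V → ℝ) (f : V → ℝ) (v : V) : ℝ :=
  (1 / μ v) * ∑' u, C u v * (f v - f u)

/-- The (possibly infinite) energy of `f`. -/
def energy (C : V → V → ℝ) (f : V → ℝ) : ℝ≥0∞ :=
  (1 / 2) * ∑' p : V × V, ENNReal.ofReal (C p.1 p.2 * (f p.1 - f p.2) ^ 2)

variable [MetricSpace V]

/-- A path in the completion `Ḡ` joining `x` and `y`: a two-sided sequence of
vertices (stationary steps are allowed, so this encodes finite paths, rays and
double rays) converging to `x` and `y` at its two ends. -/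
structure CPath (x y : Completion V) where
  p : ℤ → V
  step : ∀ k, p k = p (k + 1) ∨ G.Adj (p k) (p (k + 1))
  tendsto_left : Tendsto (fun n : ℕ => ((p (-(n : ℤ)) : V) : Completion V)) atTop (nhds x)
  tendsto_right : Tendsto (fun n : ℕ => ((p (n : ℤ) : V) : Completion V)) atTop (nhds y)

end WGraph

/-- The path `γ` uses (contains) the edge `e`. -/
def WGraph.CPath.uses {V : Type*} [MetricSpace V] {G : WGraph V}
    {x y : Completion V} (γ : G.CPath x y) (e : Sym2 V) : Prop :=
  ∃ k : ℤ, γ.p k ≠ γ.p (k + 1) ∧ e = s(γ.p k, γ.p (k + 1))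

namespace WGraph

variable {V : Type*} (G : WGraph V) [MetricSpace V]

/-- The completion `Ḡ` is weakly connected: any two distinct points admit a
finite set of edges met by every path joining them. -/
def WeaklyConnected : Prop :=
  ∀ x y : Completion V, x ≠ y →
    ∃ W : Set (Sym2 V), W.Finite ∧ W ⊆ G.edgeSet ∧
      ∀ γ : G.CPath x y, ∃ e ∈ W, γ.uses e

end WGraph

/-!
By Stone–Weierstrass it suffices that eventually flat functions separate the points of `Ḡ`.
For `x ≠ y`, weak connectivity gives a finite set `W` of edges met by every path from `x` to `y`;
let `δ` be the least resistance of an edge of `W`. Paths of length `< δ` avoid `W`, so the indicator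
of the component of `G \ W` containing a vertex `u` near `x` is constant on `δ`-balls; hence it
extends continuously to `Ḡ`, and it changes only across edges of `W`. It cannot take the same value
near `y`: concatenating short paths between ever closer approximations of `x`, and of `y`, with a
path from `u` avoiding `W` would give a path from `x` to `y` avoiding `W`.
-/

open Set

section Chains

variable {α β : Type*}

/-- State `(n, k)` stands for the `k`-th vertex of the `n`-th chain; after the last vertex of a
chain comes the first vertex of the next one. -/
def chainStep (L : ℕ → ℕ) (i : ℕ × ℕ) : ℕ × ℕ :=
  if i.2 < L i.1 then (i.1, i.2 + 1) else (i.1 + 1, 0)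

lemma fst_le_fst_chainStep (L : ℕ → ℕ) (i : ℕ × ℕ) : i.1 ≤ (chainStep L i).1 := by
  unfold chainStep; split_ifs <;> simp

lemma snd_chainStep_le (L : ℕ → ℕ) (i : ℕ × ℕ) : (chainStep L i).2 ≤ L (chainStep L i).1 := by
  unfold chainStep
  split_ifs with h
  exacts [h, Nat.zero_le _]

lemma snd_chainStep_iterate_le (L : ℕ → ℕ) (m : ℕ) :
    ((chainStep L)^[m] (0, 0)).2 ≤ L ((chainStep L)^[m] (0, 0)).1 := by
  cases m with
  | zero => exact Nat.zero_le _
  | succ m => rw [Function.iterate_succ_apply']; exact snd_chainStep_le L _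

lemma chainStep_iterate_block (L : ℕ → ℕ) (n : ℕ) :
    (chainStep L)^[L n + 1] (n, 0) = (n + 1, 0) := by
  have hblock : ∀ j ≤ L n, (chainStep L)^[j] (n, 0) = (n, j) := by
    intro j hj
    induction j with
    | zero => rfl
    | succ j ih =>
      rw [Function.iterate_succ_apply', ih (by omega)]
      simp [chainStep, show j < L n by omega]
  rw [Function.iterate_succ_apply', hblock _ le_rfl]
  simp [chainStep]

lemma exists_chainStep_iterate_eq (L : ℕ → ℕ) (n : ℕ) :
    ∃ m, (chainStep L)^[m] (0, 0) = (n, 0) := by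
  induction n with
  | zero => exact ⟨0, rfl⟩
  | succ n ih =>
    obtain ⟨m, hm⟩ := ih
    exact ⟨L n + 1 + m, by rw [Function.iterate_add_apply, hm, chainStep_iterate_block]⟩

theorem exists_seq_of_chains {r : α → α → Prop} {s : ℕ → Set β} {l : Filter β} (f : α → β)
    (L : ℕ → ℕ) (P : ℕ → ℕ → α) (hlink : ∀ n, P n (L n) = P (n + 1) 0)
    (hstep : ∀ n, ∀ k < L n, r (P n k) (P n (k + 1)))
    (hmem : ∀ n, ∀ k ≤ L n, f (P n k) ∈ s n) (hs : Tendsto s atTop l.smallSets) :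
    ∃ q : ℕ → α, q 0 = P 0 0 ∧ (∀ m, q m = q (m + 1) ∨ r (q m) (q (m + 1))) ∧
      Tendsto (f ∘ q) atTop l := by
  set st : ℕ → ℕ × ℕ := fun m => (chainStep L)^[m] (0, 0)
  have hst : ∀ m, st (m + 1) = chainStep L (st m) := fun m => Function.iterate_succ_apply' ..
  have hblk : Tendsto (fun m => (st m).1) atTop atTop := by
    refine tendsto_atTop_atTop_of_monotone
      (monotone_nat_of_le_succ fun m => hst m ▸ fst_le_fst_chainStep L _) fun n => ?_
    obtain ⟨m, hm⟩ := exists_chainStep_iterate_eq L n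
    exact ⟨m, (congrArg Prod.fst hm).ge⟩
  refine ⟨fun m => P (st m).1 (st m).2, rfl, fun m => ?_,
    (hs.comp hblk).of_smallSets (Eventually.of_forall fun m =>
      hmem _ _ (snd_chainStep_iterate_le L m))⟩
  have hle : (st m).2 ≤ L (st m).1 := snd_chainStep_iterate_le L m
  simp only [hst, chainStep]
  split_ifs with h
  · exact Or.inr (hstep _ _ h)
  · exact Or.inl (by rw [← hlink, show (st m).2 = L (st m).1 by omega])

end Chains

theorem Sym2.finite_preimage_mk {α : Type*} {W : Set (Sym2 α)} (hW : W.Finite) :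
    {p : α × α | s(p.1, p.2) ∈ W}.Finite :=
  hW.preimage' fun e _ => by
    induction e using Sym2.ind with
    | _ a b =>
      refine ((finite_singleton (a, b)).insert (b, a)).subset fun p hp => ?_
      rcases Sym2.eq_iff.1 hp with ⟨rfl, rfl⟩ | ⟨rfl, rfl⟩ <;> simp

section LocallyConstant

variable {α β : Type*} [PseudoMetricSpace α] [UniformSpace β]

lemma uniformContinuous_of_dist_lt_imp_eq {f : α → β} {δ : ℝ} (hδ : 0 < δ)
    (hf : ∀ a b, dist a b < δ → f a = f b) : UniformContinuous f :=
  uniformContinuous_def.2 fun _ hU => mem_of_superset (Metric.dist_mem_uniformity hδ) fun p hp => by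
    simpa [hf _ _ hp] using refl_mem_uniformity hU

lemma UniformSpace.Completion.extension_eq_of_dist_lt [CompleteSpace β] [T2Space β]
    {f : α → β} {δ : ℝ} (hf : ∀ a b, dist a b < δ → f a = f b) {z : Completion α} {w : α}
    (hz : dist z w < δ) : Completion.extension f z = f w := by
  have huc := uniformContinuous_of_dist_lt_imp_eq (dist_nonneg.trans_lt hz) hf
  have hball : EqOn (Completion.extension f) (fun _ => f w)
      (Metric.ball (w : Completion α) δ ∩ range ((↑) : α → Completion α)) := by
    rintro _ ⟨hb, a, rfl⟩
    rw [Metric.mem_ball, Completion.dist_eq] at hb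
    exact (Completion.extension_coe huc a).trans (hf a w hb)
  exact hball.closure Completion.continuous_extension continuous_const
    (Completion.denseRange_coe.open_subset_closure_inter Metric.isOpen_ball (Metric.mem_ball.2 hz))

end LocallyConstant

lemma DenseRange.exists_seq_dist_lt {α β : Type*} [PseudoMetricSpace α] {f : β → α}
    (hf : DenseRange f) (x : α) {c : ℕ → ℝ} (hc : ∀ n, 0 < c n) {b : β}
    (hb : dist x (f b) < c 0) : ∃ u : ℕ → β, u 0 = b ∧ ∀ n, dist x (f (u n)) < c n := by
  choose u hu using fun n => hf.exists_dist_lt x (hc n)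
  exact ⟨fun | 0 => b | n + 1 => u (n + 1), rfl, fun | 0 => hb | n + 1 => hu _⟩

namespace SimpleGraph

variable {V : Type*} {H H' : SimpleGraph V}

lemma reachable_of_forall_adj_succ {p : ℕ → V} {n : ℕ} (h : ∀ k < n, H.Adj (p k) (p (k + 1))) :
    H.Reachable (p 0) (p n) := by
  induction n with
  | zero => rfl
  | succ n ih => exact (ih fun k hk => h k (by omega)).trans (h n n.lt_succ_self).reachable

variable [UniformSpace V] {u v : V} {x : Completion V}

def HasRayTo (H : SimpleGraph V) (v : V) (x : Completion V) : Prop :=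
  ∃ q : ℕ → V, q 0 = v ∧ (∀ k, q k = q (k + 1) ∨ H.Adj (q k) (q (k + 1))) ∧
    Tendsto (fun k => (q k : Completion V)) atTop (𝓝 x)

lemma HasRayTo.mono (hle : H ≤ H') (h : H.HasRayTo v x) : H'.HasRayTo v x := by
  obtain ⟨q, hq0, hq, hlim⟩ := h
  exact ⟨q, hq0, fun k => (hq k).imp_right fun h => hle h, hlim⟩

lemma HasRayTo.of_adj (huv : H.Adj u v) (h : H.HasRayTo v x) : H.HasRayTo u x := by
  obtain ⟨q, hq0, hq, hlim⟩ := h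
  refine ⟨fun | 0 => u | k + 1 => q k, rfl, ?_, (tendsto_add_atTop_iff_nat 1).1 hlim⟩
  rintro (_ | k)
  · exact Or.inr (hq0.symm ▸ huv : H.Adj u (q 0))
  · exact hq k

lemma HasRayTo.of_reachable (huv : H.Reachable u v) (h : H.HasRayTo v x) : H.HasRayTo u x := by
  obtain ⟨w⟩ := huv
  induction w with
  | nil => exact h
  | cons hadj _ ih => exact (ih h).of_adj hadj

end SimpleGraph

namespace WGraph

variable {V : Type*} (G : WGraph V)

def toSimpleGraph : SimpleGraph V where
  Adj := G.Adj
  symm := ⟨G.symm⟩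
  loopless := ⟨G.loopless⟩

def shortGraph (r : ℝ) : SimpleGraph V where
  Adj u v := G.Adj u v ∧ G.R u v < r
  symm := ⟨fun u v h => ⟨G.symm u v h.1, G.Rsymm u v ▸ h.2⟩⟩
  loopless := ⟨fun v h => G.loopless v h.1⟩

lemma shortGraph_mono {r r' : ℝ} (h : r ≤ r') : G.shortGraph r ≤ G.shortGraph r' :=
  fun _ _ huv => ⟨huv.1, huv.2.trans_le h⟩

lemma exists_shortGraph_le_deleteEdges {W : Set (Sym2 V)} (hW : W.Finite)
    (hsub : W ⊆ G.edgeSet) : ∃ δ > 0, G.shortGraph δ ≤ G.toSimpleGraph.deleteEdges W := by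
  let R₂ : Sym2 V → ℝ := Sym2.lift ⟨G.R, G.Rsymm⟩
  have hpos : ∀ e ∈ W, 0 < R₂ e := by
    intro e he
    obtain ⟨u, v, huv, rfl⟩ := hsub he
    exact G.Rpos u v huv
  have hsmall : ∀ᶠ δ in 𝓝[>] (0 : ℝ), ∀ e ∈ W, δ < R₂ e :=
    (hW.eventually_all).2 fun e he => nhdsWithin_le_nhds (eventually_lt_nhds (hpos e he))
  obtain ⟨δ, hδW, hδ⟩ := (hsmall.and self_mem_nhdsWithin).exists
  refine ⟨δ, hδ, fun u v huv => SimpleGraph.deleteEdges_adj.2 ⟨huv.1, fun he => ?_⟩⟩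
  exact absurd (huv.2.trans (hδW s(u, v) he)) (lt_irrefl (G.R u v))

theorem eventuallyFlat_of_forall_deleteEdges_adj {W : Set (Sym2 V)} (hW : W.Finite)
    {φ : V → ℝ} (h : ∀ u v, (G.toSimpleGraph.deleteEdges W).Adj u v → φ u = φ v) :
    G.EventuallyFlat φ :=
  (Sym2.finite_preimage_mk hW).subset fun p ⟨hadj, hne⟩ => by
    by_contra hp
    exact hne (h _ _ (SimpleGraph.deleteEdges_adj.2 ⟨hadj, hp⟩))

lemma EventuallyFlat.map₂ {φ ψ : V → ℝ} (hφ : G.EventuallyFlat φ) (hψ : G.EventuallyFlat ψ)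
    (f : ℝ → ℝ → ℝ) : G.EventuallyFlat fun v => f (φ v) (ψ v) :=
  (hφ.union hψ).subset fun p ⟨hadj, hne⟩ => by
    by_cases hφp : φ p.1 = φ p.2
    · exact Or.inr ⟨hadj, fun hψp => hne (by simp only [hφp, hψp])⟩
    · exact Or.inl ⟨hadj, hφp⟩

lemma eventuallyFlat_const (c : ℝ) : G.EventuallyFlat fun _ => c := by
  simp [EventuallyFlat]

def eventuallyFlatSubalgebra : Subalgebra ℝ (V → ℝ) where
  carrier := {φ | G.EventuallyFlat φ}
  mul_mem' hφ hψ := EventuallyFlat.map₂ G hφ hψ (· * ·)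
  add_mem' hφ hψ := EventuallyFlat.map₂ G hφ hψ (· + ·)
  algebraMap_mem' c := G.eventuallyFlat_const c

variable [MetricSpace V]

lemma dist_le_sum_R (hmet : G.IsPathMetric) {n : ℕ} {p : ℕ → V}
    (hp : ∀ k < n, G.Adj (p k) (p (k + 1))) :
    dist (p 0) (p n) ≤ ∑ k ∈ Finset.range n, G.R (p k) (p (k + 1)) := by
  have hbdd : BddBelow (G.pathLengths (p 0) (p n)) := by
    refine ⟨0, ?_⟩
    rintro _ ⟨m, q, -, -, hq, rfl⟩
    exact Finset.sum_nonneg fun k hk => (G.Rpos _ _ (hq k (Finset.mem_range.1 hk))).le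
  exact (hmet _ _).trans_le (csInf_le hbdd ⟨n, p, rfl, rfl, hp, rfl⟩)

lemma exists_short_path (hmet : G.IsPathMetric) (hconn : G.Connected) {u v : V} {r : ℝ}
    (h : dist u v < r) :
    ∃ (n : ℕ) (p : ℕ → V), p 0 = u ∧ p n = v ∧
      (∀ k < n, (G.shortGraph r).Adj (p k) (p (k + 1))) ∧ ∀ k ≤ n, dist u (p k) < r := by
  rw [hmet] at h
  obtain ⟨_, ⟨n, p, rfl, rfl, hadj, rfl⟩, hlt⟩ := exists_lt_of_csInf_lt (hconn _ _) h
  have hR : ∀ k ∈ Finset.range n, 0 ≤ G.R (p k) (p (k + 1)) :=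
    fun k hk => (G.Rpos _ _ (hadj k (Finset.mem_range.1 hk))).le
  refine ⟨n, p, rfl, rfl, fun k hk => ⟨hadj k hk,
    (Finset.single_le_sum hR (Finset.mem_range.2 hk)).trans_lt hlt⟩, fun k hk => ?_⟩
  calc dist (p 0) (p k)
      ≤ ∑ i ∈ Finset.range k, G.R (p i) (p (i + 1)) :=
        G.dist_le_sum_R hmet fun i hi => hadj i (by omega)
    _ ≤ ∑ i ∈ Finset.range n, G.R (p i) (p (i + 1)) :=
        Finset.sum_le_sum_of_subset_of_nonneg (Finset.range_subset_range.2 hk)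
          fun i hi _ => hR i hi
    _ < r := hlt

lemma reachable_shortGraph_of_dist_lt (hmet : G.IsPathMetric) (hconn : G.Connected)
    {u v : V} {r : ℝ} (h : dist u v < r) : (G.shortGraph r).Reachable u v := by
  obtain ⟨n, p, rfl, rfl, hadj, -⟩ := G.exists_short_path hmet hconn h
  exact SimpleGraph.reachable_of_forall_adj_succ hadj

/-- Joining vertices `u n → x` with `dist x (u n) < r / 2 ^ n` by short paths gives a ray whose
`n`-th block stays within `3 r / 2 ^ n` of `x`. -/
lemma hasRayTo_shortGraph (hmet : G.IsPathMetric) (hconn : G.Connected) {x : Completion V}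
    {u₀ : V} {r : ℝ} (h : dist x u₀ < r) : (G.shortGraph (2 * r)).HasRayTo u₀ x := by
  have hr : 0 < r := dist_nonneg.trans_lt h
  set c : ℕ → ℝ := fun n => r / 2 ^ n
  have hc_pos : ∀ n, 0 < c n := fun n => by positivity
  have hc_le : ∀ n, c n ≤ r := fun n => div_le_self hr.le (one_le_pow₀ one_le_two)
  have hc_succ : ∀ n, c (n + 1) = c n / 2 := fun n => by simp only [c, pow_succ, div_div]
  have hc_lim : Tendsto (fun n => 3 * c n) atTop (𝓝 0) := by
    simpa [c, div_eq_mul_inv] using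
      ((tendsto_pow_atTop_nhds_zero_of_lt_one (by norm_num : (0 : ℝ) ≤ 2⁻¹)
        (by norm_num)).const_mul r).const_mul 3
  obtain ⟨u, hu0, hu⟩ :=
    Completion.denseRange_coe.exists_seq_dist_lt x hc_pos (by simpa [c] using h)
  have hstep : ∀ n, dist (u n) (u (n + 1)) < 2 * c n := fun n => by
    calc dist (u n) (u (n + 1)) = dist (u n : Completion V) (u (n + 1)) :=
          (Completion.dist_eq _ _).symm
      _ ≤ dist x (u n) + dist x (u (n + 1)) := dist_triangle_left _ _ _
      _ < c n + c (n + 1) := add_lt_add (hu n) (hu (n + 1))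
      _ ≤ 2 * c n := by linarith [hc_succ n, hc_pos n]
  choose L P hP0 hPL hPadj hPdist using fun n => G.exists_short_path hmet hconn (hstep n)
  have hmem : ∀ n, ∀ k ≤ L n, (P n k : Completion V) ∈ Metric.closedBall x (3 * c n) := by
    intro n k hk
    rw [Metric.mem_closedBall, dist_comm]
    calc dist x (P n k : Completion V)
        ≤ dist x (u n) + dist (u n : Completion V) (P n k) := dist_triangle _ _ _
      _ ≤ c n + 2 * c n := by
          rw [Completion.dist_eq]
          exact add_le_add (hu n).le (hPdist n k hk).le
      _ = 3 * c n := by ring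
  obtain ⟨q, hq0, hq, hlim⟩ := exists_seq_of_chains (r := (G.shortGraph (2 * r)).Adj) (↑) L P
    (fun n => (hPL n).trans (hP0 (n + 1)).symm)
    (fun n k hk => G.shortGraph_mono (by linarith [hc_le n]) (hPadj n k hk)) hmem
    ((tendsto_closedBall_smallSets x).comp hc_lim)
  exact ⟨q, hq0.trans ((hP0 0).trans hu0), hq, hlim⟩

lemma exists_cPath_of_hasRayTo {H : SimpleGraph V} (hH : H ≤ G.toSimpleGraph) {v : V}
    {x y : Completion V} (hx : H.HasRayTo v x) (hy : H.HasRayTo v y) :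
    ∃ γ : G.CPath x y, ∀ e, γ.uses e → e ∈ H.edgeSet := by
  obtain ⟨a, ha0, ha, hax⟩ := hx
  obtain ⟨b, hb0, hb, hby⟩ := hy
  set p : ℤ → V := fun k => if 0 ≤ k then b k.toNat else a (-k).toNat
  have hp_nat : ∀ n : ℕ, p n = b n := fun n => by simp [p]
  have hp_neg : ∀ n : ℕ, p (-n) = a n := by
    rintro (_ | n)
    · simp [p, ha0, hb0]
    · simp [p]; omega
  have hstep_nat : ∀ n : ℕ, p n = p (n + 1) ∨ H.Adj (p n) (p (n + 1)) := fun n => by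
    rw [hp_nat, ← Nat.cast_succ, hp_nat]
    exact hb n
  have hstep : ∀ k, p k = p (k + 1) ∨ H.Adj (p k) (p (k + 1)) := by
    intro k
    obtain ⟨n, rfl | rfl⟩ := Int.eq_nat_or_neg k
    · exact hstep_nat n
    · rcases n with _ | n
      · simpa using hstep_nat 0
      · rw [hp_neg, show -((n + 1 : ℕ) : ℤ) + 1 = -(n : ℤ) by push_cast; ring, hp_neg]
        exact (ha n).imp Eq.symm SimpleGraph.Adj.symm
  refine ⟨⟨p, fun k => (hstep k).imp_right fun h => hH h, by simpa [hp_neg] using hax,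
    by simpa [hp_nat] using hby⟩, ?_⟩
  rintro e ⟨k, hne, rfl⟩
  exact (hstep k).resolve_left hne

lemma not_reachable_deleteEdges_of_cut (hmet : G.IsPathMetric) (hconn : G.Connected)
    {x y : Completion V} {W : Set (Sym2 V)} (hcut : ∀ γ : G.CPath x y, ∃ e ∈ W, γ.uses e)
    {δ : ℝ} (hshort : G.shortGraph δ ≤ G.toSimpleGraph.deleteEdges W) {u v : V}
    (hu : dist x u < δ / 2) (hv : dist y v < δ / 2) :
    ¬ (G.toSimpleGraph.deleteEdges W).Reachable u v := fun huv => by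
  have hray : ∀ {z : Completion V} {w : V}, dist z w < δ / 2 →
      (G.toSimpleGraph.deleteEdges W).HasRayTo w z := fun h =>
    (G.hasRayTo_shortGraph hmet hconn h).mono ((G.shortGraph_mono (by linarith)).trans hshort)
  obtain ⟨γ, hγ⟩ := G.exists_cPath_of_hasRayTo (SimpleGraph.deleteEdges_le W) (hray hu)
    ((hray hv).of_reachable huv)
  obtain ⟨e, heW, he⟩ := hcut γ
  have hedge := hγ e he
  rw [SimpleGraph.edgeSet_deleteEdges] at hedge
  exact hedge.2 heW

theorem exists_eventuallyFlat_separating (hmet : G.IsPathMetric) (hconn : G.Connected)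
    (hw : G.WeaklyConnected) {x y : Completion V} (hxy : x ≠ y) :
    ∃ Φ : C(Completion V, ℝ), G.EventuallyFlat (fun v => Φ v) ∧ Φ x ≠ Φ y := by
  classical
  obtain ⟨W, hWfin, hWsub, hcut⟩ := hw x y hxy
  set H := G.toSimpleGraph.deleteEdges W
  obtain ⟨δ, hδ, hshort⟩ := G.exists_shortGraph_le_deleteEdges hWfin hWsub
  obtain ⟨u, hu⟩ := Completion.denseRange_coe.exists_dist_lt x (half_pos hδ)
  obtain ⟨v, hv⟩ := Completion.denseRange_coe.exists_dist_lt y (half_pos hδ)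
  let φ : V → ℝ := fun w => if H.connectedComponentMk w = H.connectedComponentMk u then 1 else 0
  have hφ : ∀ a b, H.Reachable a b → φ a = φ b := fun a b hab => by
    simp only [φ, SimpleGraph.ConnectedComponent.sound hab]
  have hloc : ∀ a b, dist a b < δ → φ a = φ b := fun a b hab =>
    hφ a b ((G.reachable_shortGraph_of_dist_lt hmet hconn hab).mono hshort)
  have hext : ∀ {z : Completion V} {w : V}, dist z w < δ → Completion.extension φ z = φ w :=
    Completion.extension_eq_of_dist_lt hloc
  refine ⟨⟨Completion.extension φ, Completion.continuous_extension⟩, ?_, ?_⟩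
  · have : (fun w : V => Completion.extension φ w) = φ := funext fun w => hext (by simpa using hδ)
    simp only [ContinuousMap.coe_mk, this]
    exact G.eventuallyFlat_of_forall_deleteEdges_adj hWfin fun a b hab => hφ a b hab.reachable
  · have hsplit := G.not_reachable_deleteEdges_of_cut hmet hconn hcut hshort hu hv
    simp only [ContinuousMap.coe_mk]
    rw [hext (hu.trans (half_lt_self hδ)), hext (hv.trans (half_lt_self hδ))]
    simpa [φ, SimpleGraph.ConnectedComponent.eq] using fun h : H.Reachable v u => hsplit h.symm

end WGraph

theorem eventuallyFlat_dense_general {V : Type*} [MetricSpace V]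
    (G : WGraph V) (hmet : G.IsPathMetric) (hconn : G.Connected)
    (hw : G.WeaklyConnected) [CompactSpace (UniformSpace.Completion V)]
    (F : UniformSpace.Completion V → ℝ) (hF : Continuous F) :
    ∀ ε > (0 : ℝ), ∃ (φ : V → ℝ) (Φ : UniformSpace.Completion V → ℝ),
      G.EventuallyFlat φ ∧ Continuous Φ ∧ (∀ v : V, Φ ↑v = φ v) ∧
      ∀ x, |F x - Φ x| ≤ ε := by
  intro ε hε
  let restrict : C(Completion V, ℝ) →ₐ[ℝ] V → ℝ := (ContinuousMap.coeFnAlgHom ℝ).comp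
    (ContinuousMap.compRightAlgHom ℝ ℝ ⟨(↑), Completion.continuous_coe V⟩)
  let A := G.eventuallyFlatSubalgebra.comap restrict
  have hsep : A.SeparatesPoints := fun x y hxy => by
    obtain ⟨Φ, hflat, hne⟩ := G.exists_eventuallyFlat_separating hmet hconn hw hxy
    exact ⟨Φ, ⟨Φ, hflat, rfl⟩, hne⟩
  obtain ⟨⟨Φ, hΦ⟩, hclose⟩ :=
    ContinuousMap.exists_mem_subalgebra_near_continuous_of_separatesPoints A hsep F hF ε hε
  refine ⟨fun v => Φ v, Φ, hΦ, Φ.continuous, fun v => rfl, fun x => ?_⟩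
  rw [abs_sub_comm]
  exact (hclose x).le

/-- if the completion is weakly connected and compact, the
eventually flat functions are uniformly dense in the continuous functions. -/
theorem eventuallyFlat_dense {V : Type*} [MetricSpace V] [Countable V]
    (G : WGraph V) (hmet : G.IsPathMetric) (hconn : G.Connected)
    (hw : G.WeaklyConnected) [CompactSpace (UniformSpace.Completion V)]
    (F : UniformSpace.Completion V → ℝ) (hF : Continuous F) :
    ∀ ε > (0 : ℝ), ∃ (φ : V → ℝ) (Φ : UniformSpace.Completion V → ℝ),
      G.EventuallyFlat φ ∧ Continuous Φ ∧ (∀ v : V, Φ ↑v = φ v) ∧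
      ∀ x, |F x - Φ x| ≤ ε :=
  eventuallyFlat_dense_general G hmet hconn hw F hF
end
end

section
/- Suppose G is connected with finite diameter and infinitely many vertices, and μ(G) = Σ_v μ(v) < ∞. Then for every finitely supported f with ‖f‖_μ = 1, the energy satisfies B(f,f) ≥ 1/(4 μ(G) diam(G)); i.e., the Dirichlet Laplacian has strictly positive lower bound. -/
open UniformSpace Filter Topology
open scoped ENNReal

noncomputable section

/-! Fix a vertex `u` outside the finite support of `f`. Along a path from `u` to `v`,
Cauchy–Schwarz gives `f v ^ 2 ≤ (length) · 2 B(f,f)` once every edge is counted only once, so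
`f v ^ 2 ≤ 2 D B(f,f)` for every `v`. Integrating against `μ` yields
`1 = ‖f‖²_μ ≤ 2 D μ(G) B(f,f)`. -/

open Finset

section DistinctSteps

variable {α β : Type*} [PseudoMetricSpace α] [DecidableEq β]

theorem dist_le_sum_image_range_dist (g : β → α) (p : ℕ → β) (n : ℕ) :
    dist (g (p 0)) (g (p n)) ≤
      ∑ e ∈ (range n).image (fun k => (p k, p (k + 1))), dist (g e.1) (g e.2) := by
  suffices ∀ j ≤ n, dist (g (p 0)) (g (p j)) ≤
      ∑ e ∈ (range n).image (fun k => (p k, p (k + 1))), dist (g e.1) (g e.2) from this n le_rfl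
  induction n with
  | zero => intro j hj; simp [Nat.le_zero.mp hj]
  | succ n ih =>
    set S := (range n).image (fun k => (p k, p (k + 1)))
    have hmono : ∑ e ∈ S, dist (g e.1) (g e.2) ≤
        ∑ e ∈ insert (p n, p (n + 1)) S, dist (g e.1) (g e.2) :=
      sum_le_sum_of_subset_of_nonneg (subset_insert _ _) fun _ _ _ => dist_nonneg
    rw [range_add_one, image_insert]
    intro j hj
    rcases hj.lt_or_eq with hj | rfl
    · exact (ih j (Nat.lt_succ_iff.mp hj)).trans hmono
    by_cases hmem : (p n, p (n + 1)) ∈ S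
    · obtain ⟨k, hk, hkn⟩ := mem_image.mp hmem
      have hrevisit := ih (k + 1) (mem_range.mp hk)
      rw [(Prod.mk.inj hkn).2] at hrevisit
      exact hrevisit.trans hmono
    · rw [sum_insert hmem]
      linarith [dist_triangle (g (p 0)) (g (p n)) (g (p (n + 1))), ih n le_rfl]

end DistinctSteps

namespace WGraph

variable {V : Type*} (G : WGraph V)

theorem cond_nonneg (u v : V) : 0 ≤ G.cond u v := by
  unfold cond
  split_ifs with h
  · exact inv_nonneg.mpr (G.Rpos u v h).le
  · exact le_rfl

theorem cond_of_adj {u v : V} (h : G.Adj u v) : G.cond u v = (G.R u v)⁻¹ := if_pos h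

theorem sum_le_two_mul_toReal_energy {C : V → V → ℝ} {f : V → ℝ} (hE : energy C f ≠ ⊤)
    (s : Finset (V × V)) (hC : ∀ e ∈ s, 0 ≤ C e.1 e.2) :
    ∑ e ∈ s, C e.1 e.2 * (f e.1 - f e.2) ^ 2 ≤ 2 * (energy C f).toReal := by
  have htwo : 2 * energy C f = ∑' e : V × V, ENNReal.ofReal (C e.1 e.2 * (f e.1 - f e.2) ^ 2) := by
    rw [energy, ← mul_assoc, one_div, ENNReal.mul_inv_cancel two_ne_zero ENNReal.ofNat_ne_top,
      one_mul]
  rw [← ENNReal.toReal_ofNat 2, ← ENNReal.toReal_mul,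
    ← ENNReal.ofReal_le_iff_le_toReal (ENNReal.mul_ne_top ENNReal.ofNat_ne_top hE), htwo,
    ENNReal.ofReal_sum_of_nonneg fun e he => mul_nonneg (hC e he) (sq_nonneg _)]
  exact ENNReal.sum_le_tsum s

theorem sq_sub_le_mul_energy_of_mem_pathLengths {f : V → ℝ} (hE : energy G.cond f ≠ ⊤)
    {u v : V} {L : ℝ} (hL : L ∈ G.pathLengths u v) :
    (f v - f u) ^ 2 ≤ 2 * L * (energy G.cond f).toReal := by
  classical
  obtain ⟨n, p, rfl, rfl, hadj, rfl⟩ := hL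
  set s := (range n).image fun k => (p k, p (k + 1))
  have hs : ∀ e ∈ s, G.Adj e.1 e.2 := by
    simp only [s, mem_image, mem_range]
    rintro _ ⟨k, hk, rfl⟩
    exact hadj k hk
  have hRnn : ∀ e ∈ s, 0 ≤ G.R e.1 e.2 := fun e he => (G.Rpos _ _ (hs e he)).le
  have hpath : |f (p n) - f (p 0)| ≤ ∑ e ∈ s, |f e.1 - f e.2| := by
    simpa only [Real.dist_eq, abs_sub_comm] using dist_le_sum_image_range_dist f p n
  have hcs : (∑ e ∈ s, |f e.1 - f e.2|) ^ 2 ≤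
      (∑ e ∈ s, G.R e.1 e.2) * ∑ e ∈ s, G.cond e.1 e.2 * (f e.1 - f e.2) ^ 2 := by
    refine sum_sq_le_sum_mul_sum_of_sq_le_mul s hRnn
      (fun e _ => mul_nonneg (G.cond_nonneg _ _) (sq_nonneg _)) fun e he => ?_
    rw [G.cond_of_adj (hs e he), sq_abs, ← mul_assoc,
      mul_inv_cancel₀ (G.Rpos _ _ (hs e he)).ne', one_mul]
  have hlen : ∑ e ∈ s, G.R e.1 e.2 ≤ ∑ k ∈ range n, G.R (p k) (p (k + 1)) :=
    sum_image_le_of_nonneg hRnn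
  have henergy := sum_le_two_mul_toReal_energy hE s fun e _ => G.cond_nonneg e.1 e.2
  calc (f (p n) - f (p 0)) ^ 2 = |f (p n) - f (p 0)| ^ 2 := (sq_abs _).symm
    _ ≤ (∑ e ∈ s, |f e.1 - f e.2|) ^ 2 := pow_le_pow_left₀ (abs_nonneg _) hpath 2
    _ ≤ (∑ k ∈ range n, G.R (p k) (p (k + 1))) * (2 * (energy G.cond f).toReal) :=
      hcs.trans (mul_le_mul hlen henergy (sum_nonneg fun e _ =>
        mul_nonneg (G.cond_nonneg _ _) (sq_nonneg _)) ((sum_nonneg hRnn).trans hlen))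
    _ = _ := by ring

theorem sq_sub_le_dist_mul_energy [MetricSpace V] (hmet : G.IsPathMetric)
    (hconn : G.Connected) {f : V → ℝ} (hE : energy G.cond f ≠ ⊤) (u v : V) :
    (f v - f u) ^ 2 ≤ 2 * dist u v * (energy G.cond f).toReal := by
  have hc : 0 ≤ 2 * (energy G.cond f).toReal := by positivity
  rw [mul_right_comm, ← smul_eq_mul, hmet, ← Real.sInf_smul_of_nonneg hc]
  refine le_csInf ((hconn u v).smul_set) ?_
  rintro _ ⟨L, hL, rfl⟩
  have hpath := G.sq_sub_le_mul_energy_of_mem_pathLengths hE hL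
  simp only [smul_eq_mul]
  linarith

end WGraph

theorem dirichlet_lower_bound_general {V : Type*} [MetricSpace V] [Infinite V]
    (G : WGraph V) (hmet : G.IsPathMetric) (hconn : G.Connected)
    (μ : V → ℝ) (hμ : ∀ v, 0 < μ v) (hμsum : Summable μ)
    (D : ℝ) (hD : ∀ u v : V, dist u v ≤ D)
    (f : V → ℝ) (hsupp : (Function.support f).Finite)
    (hnorm : (∑' v, f v ^ 2 * μ v) = 1) :
    ENNReal.ofReal (1 / (4 * (∑' v, μ v) * D)) ≤ WGraph.energy G.cond f := by
  by_cases hE : WGraph.energy G.cond f = ⊤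
  · exact hE ▸ le_top
  set E := (WGraph.energy G.cond f).toReal
  obtain ⟨u, hu⟩ : ∃ u, f u = 0 := by
    obtain ⟨u, hu⟩ := hsupp.infinite_compl.nonempty
    exact ⟨u, Function.notMem_support.mp hu⟩
  have hpoint : ∀ v, f v ^ 2 ≤ 2 * D * E := fun v => by
    simpa [hu] using (G.sq_sub_le_dist_mul_energy hmet hconn hE u v).trans
      (by gcongr; exact hD u v)
  have hmass : 1 ≤ 2 * D * E * ∑' v, μ v := by
    have hle : ∀ v, f v ^ 2 * μ v ≤ 2 * D * E * μ v :=
      fun v => mul_le_mul_of_nonneg_right (hpoint v) (hμ v).le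
    rw [← hnorm, ← tsum_mul_left]
    exact Summable.tsum_mono ((hμsum.mul_left _).of_nonneg_of_le
      (fun v => mul_nonneg (sq_nonneg _) (hμ v).le) hle) (hμsum.mul_left _) hle
  rw [← ENNReal.ofReal_toReal hE]
  refine ENNReal.ofReal_le_ofReal ?_
  have hE0 : 0 ≤ E := ENNReal.toReal_nonneg
  have hMD : 0 < (∑' v, μ v) * D := by nlinarith
  rw [div_le_iff₀ (by linarith)]
  nlinarith

/-- for a connected infinite graph of finite diameter and finite
total vertex measure, the energy of a finitely supported unit vector is bounded
below by `1/(4 μ(G) diam(G))`. -/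
theorem dirichlet_lower_bound {V : Type*} [MetricSpace V] [Countable V] [Infinite V]
    (G : WGraph V) (hmet : G.IsPathMetric) (hconn : G.Connected)
    (μ : V → ℝ) (hμ : ∀ v, 0 < μ v) (hμsum : Summable μ)
    (D : ℝ) (hD : ∀ u v : V, dist u v ≤ D)
    (f : V → ℝ) (hsupp : (Function.support f).Finite)
    (hnorm : (∑' v, f v ^ 2 * μ v) = 1) :
    ENNReal.ofReal (1 / (4 * (∑' v, μ v) * D)) ≤ WGraph.energy G.cond f :=
  dirichlet_lower_bound_general G hmet hconn μ hμ hμsum D hD f hsupp hnorm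
end
end
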